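/- If real numbers k, θ1, θ2, θ3, θ4 satisfy θ1·θ4 = k·θ3, θ2 = -θ3, p = k/θ1, p̃ = k/θ4 with θ1, θ4 ≠ 0, and the recurrence θ2 - p·θ1 + k = θ3 - p·θ2 + θ1, then θ1 + θ4 = 2·θ2. -/
import Mathlib

theorem stmt_1 (k θ1 θ2 θ3 θ4 p ptilde : ℝ)
    (h14 : θ1 * θ4 = k * θ3)
    (h23 : θ2 = -θ3)
    (h1 : θ1 ≠ 0) (h4 : θ4 ≠ 0)
    (hp : p = k / θ1) (hpt : ptilde = k / θ4)
    (hrec : θ2 - p * θ1 + k = θ3 - p * θ2 + θ1) :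
    θ1 + θ4 = 2 * θ2 := by
  subst hp h23
  field_simp at hrec
  have h : θ1 * (θ1 + θ4 + 2 * θ3) = 0 := by nlinarith [hrec, h14]
  rcases mul_eq_zero.mp h with h' | h'
  · exact absurd h' h1
  · linarith
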